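/- There exist a probability distribution πref on the four-element action set A = {1,2,3,4} and two skew-symmetric functions ℓ¹, ℓ² : A×A → [−1,1] (with ℓⁱ(a,a) = 0 and ℓⁱ(a,b) + ℓⁱ(b,a) = 0), inducing preference models Pⁱ(a ≻ b) := (1 + ℓⁱ(a,b))/2, such that: (1) for each i ∈ {1,2} there exists a minimax winner π_MWⁱ ∈ argmax_{π∈Δ(A)} min_{π′∈Δ(A)} ℓⁱ(π,π′) satisfying π_MWⁱ(a) ≤ 2·πref(a) for all a ∈ A; and (2) for every n ∈ ℕ and every function Alg mapping datasets D ∈ (A×A)ⁿ to probability distributions on A, there exists i ∈ {1,2} such that E_{D ∼ μᵢⁿ}[ DG(Alg(D); ℓⁱ) ] ≥ 1/8, where a sample (a₊, a₋) ∼ μᵢ is generated by drawing a, b ∼ πref independently and setting (a₊, a₋) = (a, b) with probability Pⁱ(a ≻ b) and (a₊, a₋) = (b, a) otherwise, μᵢⁿ is the n-fold product (i.i.d. dataset) distribution, and DG(π; ℓ) := max_{π′∈Δ(A)} ℓ(π′, π) − min_{π′∈Δ(A)} ℓ(π, π′). -/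
import Mathlib


/-- Bilinear extension `ℓ(p, q) = Σ_{a,b} p(a)·q(b)·ℓ(a,b)` of a preference function. -/
noncomputable def lval (l : Fin 4 → Fin 4 → ℝ) (p q : Fin 4 → ℝ) : ℝ :=
  ∑ a, ∑ b, p a * q b * l a b

/-- Best-response value `max_{q ∈ Δ(A)} ℓ(q, π)`. -/
noncomputable def maxval (l : Fin 4 → Fin 4 → ℝ) (p : Fin 4 → ℝ) : ℝ :=
  ⨆ q : (stdSimplex ℝ (Fin 4)), lval l q p

/-- Worst-case value `min_{q ∈ Δ(A)} ℓ(π, q)`. -/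
noncomputable def minval (l : Fin 4 → Fin 4 → ℝ) (p : Fin 4 → ℝ) : ℝ :=
  ⨅ q : (stdSimplex ℝ (Fin 4)), lval l p q

/-- Duality gap `DG(π; ℓ) = max_{π′} ℓ(π′, π) − min_{π′} ℓ(π, π′)`. -/
noncomputable def DG (l : Fin 4 → Fin 4 → ℝ) (p : Fin 4 → ℝ) : ℝ :=
  maxval l p - minval l p

noncomputable def L1 : Fin 4 → Fin 4 → ℝ := ![![0,0,0,1], ![0,0,-1,1], ![0,1,0,1], ![-1,-1,-1,0]]
noncomputable def L2 : Fin 4 → Fin 4 → ℝ := ![![0,0,1,-1], ![0,0,1,0], ![-1,-1,0,-1], ![1,0,1,0]]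
noncomputable def prf : Fin 4 → ℝ := ![1/2, 1/2, 0, 0]
noncomputable def ev (i : Fin 4) : Fin 4 → ℝ := fun a => if a = i then 1 else 0

lemma ev_mem (i : Fin 4) : ev i ∈ stdSimplex ℝ (Fin 4) := by
  constructor
  · intro a; unfold ev; split <;> norm_num
  · fin_cases i <;> simp [ev, Fin.sum_univ_four]

instance : Nonempty (stdSimplex ℝ (Fin 4)) := ⟨⟨ev 0, ev_mem 0⟩⟩

lemma hL1 : ∀ a b, L1 a b ∈ Set.Icc (-1:ℝ) 1 := by
  intro a b; fin_cases a <;> fin_cases b <;> norm_num [L1]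
lemma hL2 : ∀ a b, L2 a b ∈ Set.Icc (-1:ℝ) 1 := by
  intro a b; fin_cases a <;> fin_cases b <;> norm_num [L2]

lemma lval_mem {l : Fin 4 → Fin 4 → ℝ} (hl : ∀ a b, l a b ∈ Set.Icc (-1:ℝ) 1)
    {p q : Fin 4 → ℝ} (hp : p ∈ stdSimplex ℝ (Fin 4)) (hq : q ∈ stdSimplex ℝ (Fin 4)) :
    lval l p q ∈ Set.Icc (-1:ℝ) 1 := by
  have h1 : lval l p q ≤ ∑ a, ∑ b, p a * q b := by
    apply Finset.sum_le_sum; intro a _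
    apply Finset.sum_le_sum; intro b _
    have := mul_le_mul_of_nonneg_left (hl a b).2 (mul_nonneg (hp.1 a) (hq.1 b))
    simpa [mul_assoc] using this
  have h2 : ∑ a, ∑ b, -(p a * q b) ≤ lval l p q := by
    apply Finset.sum_le_sum; intro a _
    apply Finset.sum_le_sum; intro b _
    have := mul_le_mul_of_nonneg_left (hl a b).1 (mul_nonneg (hp.1 a) (hq.1 b))
    simpa [mul_assoc] using this
  have h3 : (∑ a, ∑ b, p a * q b) = 1 := by
    simp only [← Finset.mul_sum, hq.2, mul_one]
    exact hp.2
  rw [h3] at h1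
  simp only [Finset.sum_neg_distrib, h3] at h2
  exact ⟨h2, h1⟩

lemma maxval_ge {l : Fin 4 → Fin 4 → ℝ} (hl : ∀ a b, l a b ∈ Set.Icc (-1:ℝ) 1)
    {p q : Fin 4 → ℝ} (hp : p ∈ stdSimplex ℝ (Fin 4)) (hq : q ∈ stdSimplex ℝ (Fin 4)) :
    lval l q p ≤ maxval l p := by
  apply le_ciSup (f := fun r : stdSimplex ℝ (Fin 4) => lval l r p) _ ⟨q, hq⟩
  refine ⟨1, ?_⟩
  rintro x ⟨r, rfl⟩
  exact (lval_mem hl r.2 hp).2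

lemma minval_le {l : Fin 4 → Fin 4 → ℝ} (hl : ∀ a b, l a b ∈ Set.Icc (-1:ℝ) 1)
    {p q : Fin 4 → ℝ} (hp : p ∈ stdSimplex ℝ (Fin 4)) (hq : q ∈ stdSimplex ℝ (Fin 4)) :
    minval l p ≤ lval l p q := by
  apply ciInf_le (f := fun r : stdSimplex ℝ (Fin 4) => lval l p r) _ ⟨q, hq⟩
  refine ⟨-1, ?_⟩
  rintro x ⟨r, rfl⟩
  exact (lval_mem hl hp r.2).1

lemma comp1 (p : Fin 4 → ℝ) : lval L1 (ev 2) p = p 1 + p 3 := by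
  simp [lval, L1, ev, Fin.sum_univ_four]
lemma comp2 (p : Fin 4 → ℝ) : lval L1 p (ev 2) = -(p 1 + p 3) := by
  simp [lval, L1, ev, Fin.sum_univ_four]; ring
lemma comp3 (p : Fin 4 → ℝ) : lval L2 (ev 3) p = p 0 + p 2 := by
  simp [lval, L2, ev, Fin.sum_univ_four]
lemma comp4 (p : Fin 4 → ℝ) : lval L2 p (ev 3) = -(p 0 + p 2) := by
  simp [lval, L2, ev, Fin.sum_univ_four]; ring
lemma diag1 (p : Fin 4 → ℝ) : lval L1 p p = 0 := by
  simp [lval, L1, Fin.sum_univ_four]; ring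
lemma diag2 (p : Fin 4 → ℝ) : lval L2 p p = 0 := by
  simp [lval, L2, Fin.sum_univ_four]; ring
lemma row1 (q : Fin 4 → ℝ) : lval L1 (ev 0) q = q 3 := by
  simp [lval, L1, ev, Fin.sum_univ_four]
lemma row2 (q : Fin 4 → ℝ) : lval L2 (ev 1) q = q 2 := by
  simp [lval, L2, ev, Fin.sum_univ_four]

lemma minval_nonpos {l : Fin 4 → Fin 4 → ℝ} (hl : ∀ a b, l a b ∈ Set.Icc (-1:ℝ) 1)
    (hd : ∀ p : Fin 4 → ℝ, lval l p p = 0)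
    {p : Fin 4 → ℝ} (hp : p ∈ stdSimplex ℝ (Fin 4)) : minval l p ≤ 0 := by
  have := minval_le hl hp hp
  rw [hd p] at this; exact this

lemma minval_ev0 : 0 ≤ minval L1 (ev 0) := by
  apply le_ciInf
  intro q
  rw [row1]
  exact q.2.1 3

lemma minval_ev1 : 0 ≤ minval L2 (ev 1) := by
  apply le_ciInf
  intro q
  rw [row2]
  exact q.2.1 2

lemma DG_sum_ge {p : Fin 4 → ℝ} (hp : p ∈ stdSimplex ℝ (Fin 4)) : 2 ≤ DG L1 p + DG L2 p := by
  have h1 : lval L1 (ev 2) p ≤ maxval L1 p := maxval_ge hL1 hp (ev_mem 2)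
  have h2 : minval L1 p ≤ lval L1 p (ev 2) := minval_le hL1 hp (ev_mem 2)
  have h3 : lval L2 (ev 3) p ≤ maxval L2 p := maxval_ge hL2 hp (ev_mem 3)
  have h4 : minval L2 p ≤ lval L2 p (ev 3) := minval_le hL2 hp (ev_mem 3)
  rw [comp1] at h1; rw [comp2] at h2; rw [comp3] at h3; rw [comp4] at h4
  have hs : p 0 + p 1 + p 2 + p 3 = 1 := by
    have := hp.2; rwa [Fin.sum_univ_four] at this
  unfold DG
  linarith

lemma fac1 : ∀ a b : Fin 4, 2 * prf a * prf b * ((1 + L1 a b) / 2) = prf a * prf b := by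
  intro a b; fin_cases a <;> fin_cases b <;> norm_num [prf, L1]
lemma fac2 : ∀ a b : Fin 4, 2 * prf a * prf b * ((1 + L2 a b) / 2) = prf a * prf b := by
  intro a b; fin_cases a <;> fin_cases b <;> norm_num [prf, L2]

lemma sumprod {X : Type*} [Fintype X] (n : ℕ) (g : X → ℝ) (hg : ∑ x, g x = 1) :
    ∑ D : Fin n → X, ∏ k, g (D k) = 1 := by
  rw [← Fintype.piFinset_univ, ← Finset.prod_univ_sum]
  simp [hg]

lemma Wsum (n : ℕ) : ∑ D : Fin n → Fin 4 × Fin 4, ∏ k, prf (D k).1 * prf (D k).2 = 1 := by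
  have hg : ∑ x : Fin 4 × Fin 4, prf x.1 * prf x.2 = 1 := by
    rw [Fintype.sum_prod_type]
    simp [prf, Fin.sum_univ_four]
    norm_num
  simpa using sumprod n (fun x : Fin 4 × Fin 4 => prf x.1 * prf x.2) hg

/-- Impossibility of single-policy concentrability for offline alignment under general
preference models (Theorem 5.1): there are a data-collection distribution `πref` on four
actions and two skew-symmetric preference functions `ℓ¹, ℓ²` with values in `[-1,1]` such
that each instance admits a minimax winner with L∞ concentrability at most `2`, yet every
algorithm mapping datasets of `n` Bradley–Terry-style labeled pairs to policies incurs
expected duality gap at least `1/8` on one of the two instances. -/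
theorem general_preference_lower_bound :
    ∃ (pref : Fin 4 → ℝ) (l : Fin 2 → Fin 4 → Fin 4 → ℝ),
      (∀ a, 0 ≤ pref a) ∧ (∑ a, pref a = 1) ∧
      (∀ i a b, l i a b ∈ Set.Icc (-1 : ℝ) 1) ∧
      (∀ i a, l i a a = 0) ∧
      (∀ i a b, l i a b + l i b a = 0) ∧
      (∀ i, ∃ pMW : Fin 4 → ℝ,
        (∀ a, 0 ≤ pMW a) ∧ (∑ a, pMW a = 1) ∧
        (∀ p : Fin 4 → ℝ, (∀ a, 0 ≤ p a) → (∑ a, p a = 1) →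
          minval (l i) p ≤ minval (l i) pMW) ∧
        (∀ a, pMW a ≤ 2 * pref a)) ∧
      (∀ n : ℕ, ∀ Alg : (Fin n → Fin 4 × Fin 4) → (Fin 4 → ℝ),
        (∀ D, (∀ a, 0 ≤ Alg D a) ∧ ∑ a, Alg D a = 1) →
        ∃ i, 1 / 8 ≤ ∑ D : Fin n → Fin 4 × Fin 4,
          (∏ k, 2 * pref (D k).1 * pref (D k).2 * ((1 + l i (D k).1 (D k).2) / 2)) *
            DG (l i) (Alg D)) := by
  refine ⟨prf, ![L1, L2], ?_, ?_, ?_, ?_, ?_, ?_, ?_⟩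
  · intro a; fin_cases a <;> norm_num [prf]
  · simp [prf, Fin.sum_univ_four]; norm_num
  · intro i a b; fin_cases i
    · exact hL1 a b
    · exact hL2 a b
  · intro i a; fin_cases i <;> fin_cases a <;> norm_num [L1, L2]
  · intro i a b; fin_cases i <;> fin_cases a <;> fin_cases b <;> norm_num [L1, L2]
  · intro i; fin_cases i
    · refine ⟨ev 0, (ev_mem 0).1, (ev_mem 0).2, ?_, ?_⟩
      · intro p hp0 hp1
        simp only [Matrix.cons_val_zero]
        exact le_trans (minval_nonpos hL1 diag1 ⟨hp0, hp1⟩) minval_ev0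
      · intro a; fin_cases a <;> norm_num [ev, prf, Fin.ext_iff]
    · refine ⟨ev 1, (ev_mem 1).1, (ev_mem 1).2, ?_, ?_⟩
      · intro p hp0 hp1
        simp only [Matrix.cons_val_one, Matrix.head_cons]
        exact le_trans (minval_nonpos hL2 diag2 ⟨hp0, hp1⟩) minval_ev1
      · intro a; fin_cases a <;> norm_num [ev, prf, Fin.ext_iff]
  · intro n Alg hAlg
    set S1 : ℝ := ∑ D : Fin n → Fin 4 × Fin 4,
      (∏ k, 2 * prf (D k).1 * prf (D k).2 * ((1 + (![L1, L2] : Fin 2 → Fin 4 → Fin 4 → ℝ) 0 (D k).1 (D k).2) / 2)) *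
        DG ((![L1, L2] : Fin 2 → Fin 4 → Fin 4 → ℝ) 0) (Alg D) with hS1
    set S2 : ℝ := ∑ D : Fin n → Fin 4 × Fin 4,
      (∏ k, 2 * prf (D k).1 * prf (D k).2 * ((1 + (![L1, L2] : Fin 2 → Fin 4 → Fin 4 → ℝ) 1 (D k).1 (D k).2) / 2)) *
        DG ((![L1, L2] : Fin 2 → Fin 4 → Fin 4 → ℝ) 1) (Alg D) with hS2
    have e1 : S1 = ∑ D : Fin n → Fin 4 × Fin 4,
        (∏ k, prf (D k).1 * prf (D k).2) * DG L1 (Alg D) := by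
      rw [hS1]
      apply Finset.sum_congr rfl; intro D _
      congr 1
      apply Finset.prod_congr rfl; intro k _
      simpa using fac1 (D k).1 (D k).2
    have e2 : S2 = ∑ D : Fin n → Fin 4 × Fin 4,
        (∏ k, prf (D k).1 * prf (D k).2) * DG L2 (Alg D) := by
      rw [hS2]
      apply Finset.sum_congr rfl; intro D _
      congr 1
      apply Finset.prod_congr rfl; intro k _
      simpa using fac2 (D k).1 (D k).2
    have hWnn : ∀ D : Fin n → Fin 4 × Fin 4, 0 ≤ ∏ k, prf (D k).1 * prf (D k).2 := by
      intro D
      apply Finset.prod_nonneg; intro k _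
      have h0 : ∀ a : Fin 4, 0 ≤ prf a := by intro a; fin_cases a <;> norm_num [prf]
      exact mul_nonneg (h0 _) (h0 _)
    have hsum : 2 ≤ S1 + S2 := by
      rw [e1, e2, ← Finset.sum_add_distrib]
      calc (2:ℝ) = ∑ D : Fin n → Fin 4 × Fin 4, (∏ k, prf (D k).1 * prf (D k).2) * 2 := by
              rw [← Finset.sum_mul, Wsum n]; norm_num
        _ ≤ _ := by
              apply Finset.sum_le_sum; intro D _
              rw [← mul_add]
              exact mul_le_mul_of_nonneg_left (DG_sum_ge ⟨(hAlg D).1, (hAlg D).2⟩) (hWnn D)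
    by_cases h : (1:ℝ)/8 ≤ S1
    · exact ⟨0, h⟩
    · exact ⟨1, by push_neg at h; linarith⟩
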